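/- arXiv:2510.00443 — 4 statements merged into one kernel-verified Lean document; each statement's English description precedes it below -/
import Mathlib

section
/- (Existence of QSP phase factors) Let P, Q ∈ ℂ[x] and d ≥ 1 satisfy: deg P ≤ d, deg Q ≤ d-1; P has parity d mod 2 and Q has parity (d-1) mod 2; |P(x)|² + (1-x²)|Q(x)|² = 1 for all x ∈ [-1,1]. Then there exist phase factors Ψ = (ψ_0,...,ψ_d) ∈ [-π,π)^{d+1} such that U_d(x,Ψ) = [[P(x), iQ(x)√(1-x²)],[i conj(Q)(x)√(1-x²), conj(P)(x)]] for all x ∈ [-1,1]. -/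
open Matrix Complex Polynomial

noncomputable def Wx (x : ℝ) : Matrix (Fin 2) (Fin 2) ℂ :=
  !![(x : ℂ), Complex.I * Real.sqrt (1 - x ^ 2);
     Complex.I * Real.sqrt (1 - x ^ 2), (x : ℂ)]

/-- `e^{i ψ Z}` for the Pauli matrix `Z = diag(1,-1)`. -/
noncomputable def eiZ (ψ : ℝ) : Matrix (Fin 2) (Fin 2) ℂ :=
  !![Complex.exp (Complex.I * ψ), 0; 0, Complex.exp (-(Complex.I * ψ))]

/-- The QSP unitary `U_d(x, Ψ) = e^{iψ₀Z} ∏_{j=1}^d [W(x) e^{iψⱼZ}]`. -/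
noncomputable def Ud (d : ℕ) (Ψ : Fin (d + 1) → ℝ) (x : ℝ) : Matrix (Fin 2) (Fin 2) ℂ :=
  eiZ (Ψ 0) * (List.ofFn (fun j : Fin d => Wx x * eiZ (Ψ j.succ))).prod

/-- A polynomial has parity `p` if all nonzero coefficients occur in degrees `≡ p [MOD 2]`. -/
def HasParity (P : Polynomial ℂ) (p : ℕ) : Prop :=
  ∀ n : ℕ, P.coeff n ≠ 0 → n % 2 = p % 2

/-- The polynomial with complex conjugated coefficients. -/
noncomputable def polyConj (P : Polynomial ℂ) : Polynomial ℂ :=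
  P.map (starRingEnd ℂ)

lemma polyConj_eval (P : Polynomial ℂ) (x : ℝ) :
    (polyConj P).eval (x : ℂ) = starRingEnd ℂ (P.eval (x : ℂ)) := by
  rw [polyConj, Polynomial.eval_map, show ((x:ℂ)) = starRingEnd ℂ (x:ℂ) by simp,
    Polynomial.eval₂_hom]
  simp
lemma exists_arg (z : ℂ) (hz : ‖z‖ = 1) :
    ∃ ψ ∈ Set.Ico (-Real.pi) Real.pi, Complex.exp (Complex.I * ψ) = z := by
  by_cases h : z.arg = Real.pi
  · refine ⟨-Real.pi, ⟨le_refl _, by linarith [Real.pi_pos]⟩, ?_⟩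
    have := Complex.norm_mul_exp_arg_mul_I z
    rw [hz, h] at this
    simp only [ofReal_one, one_mul] at this
    rw [← this]
    push_cast
    rw [show Complex.I * -↑Real.pi = -(↑Real.pi * I) by ring, Complex.exp_neg,
      Complex.exp_pi_mul_I]
    norm_num
  · refine ⟨z.arg, ⟨(z.arg_mem_Ioc).1.le, lt_of_le_of_ne (z.arg_mem_Ioc).2 h⟩, ?_⟩
    have := Complex.norm_mul_exp_arg_mul_I z
    rw [hz] at this; simpa [mul_comm] using this

-- coeff of product at top degrees
lemma coeff_mul_top (P R : Polynomial ℂ) (m k : ℕ)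
    (hP : ∀ n, m < n → P.coeff n = 0) (hR : ∀ n, k < n → R.coeff n = 0) :
    (P * R).coeff (m + k) = P.coeff m * R.coeff k := by
  rw [Polynomial.coeff_mul]
  refine Finset.sum_eq_single (m, k) ?_ ?_
  · rintro ⟨i, j⟩ hij hne
    rw [Finset.HasAntidiagonal.mem_antidiagonal] at hij
    rcases lt_or_ge m i with hi | hi
    · rw [hP i hi, zero_mul]
    · have : k < j := by
        rcases lt_or_eq_of_le hi with h' | h'
        · omega
        · exfalso; apply hne; simp [← h']; omega
      rw [hR j this, mul_zero]
  · intro h; simp at h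
lemma abs_lead_eq (d : ℕ) (P Q : Polynomial ℂ)
    (hP : ∀ n, d + 1 < n → P.coeff n = 0) (hQ : ∀ n, d < n → Q.coeff n = 0)
    (hnorm : ∀ x ∈ Set.Icc (-1:ℝ) 1,
      P.eval (x:ℂ) * starRingEnd ℂ (P.eval (x:ℂ))
        + (1 - (x:ℂ)^2) * (Q.eval (x:ℂ) * starRingEnd ℂ (Q.eval (x:ℂ))) = 1) :
    P.coeff (d+1) * starRingEnd ℂ (P.coeff (d+1))
      = Q.coeff d * starRingEnd ℂ (Q.coeff d) := by
  set F : Polynomial ℂ := P * polyConj P + (1 - X^2) * (Q * polyConj Q) - 1 with hF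
  have hF0 : F = 0 := by
    apply Polynomial.eq_zero_of_infinite_isRoot
    apply Set.Infinite.mono (s := (fun x : ℝ => (x:ℂ)) '' Set.Icc (-1) 1)
    · rintro z ⟨x, hx, rfl⟩
      show Polynomial.IsRoot F _
      simp only [Polynomial.IsRoot, hF]
      simp only [Polynomial.eval_sub, Polynomial.eval_add, Polynomial.eval_mul,
        Polynomial.eval_one, Polynomial.eval_sub, Polynomial.eval_pow, Polynomial.eval_X,
        polyConj_eval]
      rw [hnorm x hx]; ring
    · exact (Set.Icc_infinite (by norm_num)).image
        (Set.injOn_of_injective Complex.ofReal_injective)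
  have hPc : ∀ n, d + 1 < n → (polyConj P).coeff n = 0 := by
    intro n hn; simp [polyConj, Polynomial.coeff_map, hP n hn]
  have hQc : ∀ n, d < n → (polyConj Q).coeff n = 0 := by
    intro n hn; simp [polyConj, Polynomial.coeff_map, hQ n hn]
  have hco := congrArg (fun G => Polynomial.coeff G (2*d+2)) hF0
  simp only [hF, Polynomial.coeff_sub, Polynomial.coeff_add, Polynomial.coeff_zero] at hco
  rw [sub_mul, one_mul, Polynomial.coeff_sub] at hco
  have e1 : (P * polyConj P).coeff (2*d+2) = P.coeff (d+1) * (polyConj P).coeff (d+1) := by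
    rw [show 2*d+2 = (d+1)+(d+1) by ring]; exact coeff_mul_top _ _ _ _ hP hPc
  have e2 : (Q * polyConj Q).coeff (2*d+2) = 0 := by
    rw [show 2*d+2 = (d+1)+(d+1) by ring,
      coeff_mul_top _ _ _ _ (fun n hn => hQ n (by omega)) (fun n hn => hQc n (by omega)),
      hQ (d+1) (by omega), zero_mul]
  have e3 : (X^2 * (Q * polyConj Q)).coeff (2*d+2) = Q.coeff d * (polyConj Q).coeff d := by
    rw [show 2*d+2 = 2*d + 2 by rfl, Polynomial.coeff_X_pow_mul,
      show 2*d = d+d by ring]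
    exact coeff_mul_top _ _ _ _ hQ hQc
  have e4 : (1 : Polynomial ℂ).coeff (2*d+2) = 0 := by
    rw [Polynomial.coeff_one]; simp
  rw [e1, e2, e3, e4] at hco
  have : P.coeff (d+1) * (polyConj P).coeff (d+1) = Q.coeff d * (polyConj Q).coeff d := by
    linear_combination hco
  simpa [polyConj, Polynomial.coeff_map] using this
lemma exists_psi (p q : ℂ) (h : p * starRingEnd ℂ p = q * starRingEnd ℂ q) :
    ∃ ψ ∈ Set.Ico (-Real.pi) Real.pi,
      Complex.exp (-(Complex.I * ψ)) * p = Complex.exp (Complex.I * ψ) * q := by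
  have habs : ‖p‖ = ‖q‖ := by
    rw [Complex.mul_conj, Complex.mul_conj] at h
    have := Complex.ofReal_injective h
    rw [← Real.sqrt_inj (Complex.normSq_nonneg _) (Complex.normSq_nonneg _)] at this
    simpa [Complex.norm_def] using this
  by_cases hq : q = 0
  · have hp : p = 0 := by
      rw [hq] at habs; simp at habs; exact habs
    exact ⟨0, ⟨by linarith [Real.pi_pos], Real.pi_pos⟩, by simp [hp, hq]⟩
  · set ψ := (p/q).arg / 2 with hψ
    have hqa : ‖q‖ ≠ 0 := by simpa using hq
    have habs1 : ‖p/q‖ = 1 := by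
      rw [norm_div, habs, div_self hqa]
    have hkey : Complex.exp (↑(p/q).arg * Complex.I) = p/q := by
      have := Complex.norm_mul_exp_arg_mul_I (p/q)
      rwa [habs1, Complex.ofReal_one, one_mul] at this
    have harg := Complex.arg_mem_Ioc (p/q)
    refine ⟨ψ, ⟨by rw [hψ]; nlinarith [harg.1, Real.pi_pos], by
      rw [hψ]; nlinarith [harg.2, Real.pi_pos]⟩, ?_⟩
    have h2 : Complex.exp (Complex.I*ψ) * Complex.exp (Complex.I*ψ) = p / q := by
      rw [← Complex.exp_add, show Complex.I*ψ + Complex.I*ψ = ↑(p/q).arg * Complex.I by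
        rw [hψ]; push_cast; ring, hkey]
    have hp : p = Complex.exp (Complex.I*ψ) * Complex.exp (Complex.I*ψ) * q := by
      rw [h2, div_mul_cancel₀ _ hq]
    rw [hp, Complex.exp_neg]
    field_simp
lemma coeff_mul_X' (p : Polynomial ℂ) (n : ℕ) :
    (p * X).coeff n = if 1 ≤ n then p.coeff (n-1) else 0 := by
  rw [← pow_one (X : Polynomial ℂ), Polynomial.coeff_mul_X_pow']


lemma Ud_snoc (d : ℕ) (Ψ' : Fin (d+1) → ℝ) (ψ : ℝ) (x : ℝ) :
    Ud (d+1) (Fin.snoc Ψ' ψ) x = Ud d Ψ' x * (Wx x * eiZ ψ) := by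
  unfold Ud
  rw [List.ofFn_succ', List.prod_concat, ← mul_assoc]
  have h0 : (Fin.snoc Ψ' ψ : Fin (d+1+1) → ℝ) 0 = Ψ' 0 := by
    rw [show (0 : Fin (d+1+1)) = Fin.castSucc 0 from rfl, Fin.snoc_castSucc]
  have hfun : (fun i : Fin d =>
      Wx x * eiZ ((Fin.snoc Ψ' ψ : Fin (d+1+1) → ℝ) (Fin.castSucc i).succ))
      = fun i : Fin d => Wx x * eiZ (Ψ' i.succ) := by
    funext i; rw [Fin.succ_castSucc, Fin.snoc_castSucc]
  rw [Fin.succ_last, Fin.snoc_last, h0, hfun]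

lemma qsp_aux (d : ℕ) : ∀ (P Q : Polynomial ℂ),
    (∀ n, d < n → P.coeff n = 0) →
    (∀ n, d ≤ n → Q.coeff n = 0) →
    (∀ n, P.coeff n ≠ 0 → n % 2 = d % 2) →
    (∀ n, Q.coeff n ≠ 0 → n % 2 = (d+1) % 2) →
    (∀ x ∈ Set.Icc (-1:ℝ) 1,
      P.eval (x:ℂ) * starRingEnd ℂ (P.eval (x:ℂ))
        + (1 - (x:ℂ)^2) * (Q.eval (x:ℂ) * starRingEnd ℂ (Q.eval (x:ℂ))) = 1) →
    ∃ Ψ : Fin (d + 1) → ℝ,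
      (∀ k, Ψ k ∈ Set.Ico (-Real.pi) Real.pi) ∧
      ∀ x ∈ Set.Icc (-1 : ℝ) 1,
        Ud d Ψ x =
          !![P.eval (x : ℂ), Complex.I * Q.eval (x : ℂ) * Real.sqrt (1 - x ^ 2);
             Complex.I * (polyConj Q).eval (x : ℂ) * Real.sqrt (1 - x ^ 2),
             (polyConj P).eval (x : ℂ)] := by
  induction d with
  | zero =>
    intro P Q hP hQ hPpar hQpar hnorm
    have hQ0 : Q = 0 := Polynomial.ext fun n => by simpa using hQ n (Nat.zero_le n)
    have hPC : P = C (P.coeff 0) := by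
      apply Polynomial.ext; intro n
      cases n with
      | zero => simp
      | succ m => simp [hP (m+1) (Nat.succ_pos m), Polynomial.coeff_C]
    set c := P.coeff 0 with hc
    have hcnorm : c * starRingEnd ℂ c = 1 := by
      have := hnorm 0 (by constructor <;> norm_num)
      rw [hQ0] at this
      simp only [Polynomial.eval_zero, map_zero, mul_zero, zero_mul, add_zero,
        Complex.ofReal_zero] at this
      rwa [hPC, Polynomial.eval_C] at this
    have habs : ‖c‖ = 1 := by
      rw [Complex.mul_conj] at hcnorm
      have h1 : Complex.normSq c = 1 := by exact_mod_cast hcnorm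
      rw [Complex.norm_def, h1, Real.sqrt_one]
    obtain ⟨ψ, hmem, hexp⟩ := exists_arg c habs
    refine ⟨fun _ => ψ, fun _ => hmem, fun x hx => ?_⟩
    have : Ud 0 (fun _ => ψ) x = eiZ ψ := by
      simp [Ud]
    rw [this, hQ0, hPC]
    have hconjc : Complex.exp (-(Complex.I * ψ)) = starRingEnd ℂ c := by
      rw [← hexp, ← Complex.exp_conj]
      congr 1
      simp
    ext i j
    fin_cases i <;> fin_cases j <;>
      simp [eiZ, hexp, hconjc, polyConj, Polynomial.map_C]
  | succ d ih =>
    intro P Q hP hQ hPpar hQpar hnorm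
    have hlead := abs_lead_eq d P Q hP (fun n hn => hQ n hn) hnorm
    obtain ⟨ψ, hψmem, hψeq⟩ := exists_psi (P.coeff (d+1)) (Q.coeff d) hlead
    set a := Complex.exp (-(Complex.I * ψ)) with ha
    set b := Complex.exp (Complex.I * ψ) with hb
    have hab : a * b = 1 := by
      rw [ha, hb, ← Complex.exp_add]; simp
    have hca : starRingEnd ℂ a = b := by
      rw [ha, hb, ← Complex.exp_conj]; congr 1; simp
    have hcb : starRingEnd ℂ b = a := by
      rw [← hca, RingHomInvPair.comp_apply_eq]
    set P' : Polynomial ℂ := C a * (P * X) + C b * (Q - Q * X^2) with hP'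
    set Q' : Polynomial ℂ := C b * (Q * X) - C a * P with hQ'
    have hP'c : ∀ n, P'.coeff n
        = a * (if 1 ≤ n then P.coeff (n-1) else 0)
          + b * (Q.coeff n - if 2 ≤ n then Q.coeff (n-2) else 0) := by
      intro n
      simp [hP', Polynomial.coeff_add, Polynomial.coeff_C_mul, Polynomial.coeff_sub,
        coeff_mul_X', Polynomial.coeff_mul_X_pow']
    have hQ'c : ∀ n, Q'.coeff n
        = b * (if 1 ≤ n then Q.coeff (n-1) else 0) - a * P.coeff n := by
      intro n
      simp [hQ', Polynomial.coeff_sub, Polynomial.coeff_C_mul, coeff_mul_X']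
    have hPz : ∀ m, m % 2 = d % 2 → P.coeff m = 0 := by
      intro m hm; by_contra hc; have := hPpar m hc; omega
    have hQz : ∀ m, m % 2 = (d+1) % 2 → Q.coeff m = 0 := by
      intro m hm; by_contra hc; have := hQpar m hc; omega
    -- degree bounds
    have hP'deg : ∀ n, d < n → P'.coeff n = 0 := by
      intro n hn
      rw [hP'c]
      rcases Nat.lt_trichotomy n (d+2) with h | h | h
      · rw [if_pos (show (1:ℕ) ≤ n by omega), hPz (n-1) (by omega), hQ n (by omega)]
        split_ifs with h2
        · rw [hQz (n-2) (by omega)]; ring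
        · ring
      · subst h
        rw [if_pos (show (1:ℕ) ≤ d+2 by omega), if_pos (show (2:ℕ) ≤ d+2 by omega),
          show d+2-1 = d+1 by omega, show d+2-2 = d by omega, hQ (d+2) (by omega)]
        linear_combination hψeq
      · rw [if_pos (show (1:ℕ) ≤ n by omega), if_pos (show (2:ℕ) ≤ n by omega),
          hP (n-1) (by omega), hQ n (by omega), hQ (n-2) (by omega)]
        ring
    have hQ'deg : ∀ n, d ≤ n → Q'.coeff n = 0 := by
      intro n hn
      rw [hQ'c]
      rcases Nat.lt_trichotomy n (d+1) with h | h | h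
      · rw [hPz n (by omega)]
        split_ifs with h1
        · rw [hQz (n-1) (by omega)]; ring
        · ring
      · subst h
        rw [if_pos (show (1:ℕ) ≤ d+1 by omega), Nat.add_sub_cancel]
        linear_combination -hψeq
      · rw [if_pos (show (1:ℕ) ≤ n by omega), hQ (n-1) (by omega), hP n (by omega)]
        ring
    -- parity
    have hP'par : ∀ n, P'.coeff n ≠ 0 → n % 2 = d % 2 := by
      intro n hne
      by_contra hpar
      apply hne
      rw [hP'c]
      split_ifs with h1 h2 h3
      · rw [hPz (n-1) (by omega), hQz n (by omega), hQz (n-2) (by omega)]; ring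
      · rw [hPz (n-1) (by omega), hQz n (by omega)]; ring
      · exact absurd h3 (by omega)
      · rw [hQz n (by omega)]; ring
    have hQ'par : ∀ n, Q'.coeff n ≠ 0 → n % 2 = (d+1) % 2 := by
      intro n hne
      by_contra hpar
      apply hne
      rw [hQ'c]
      rw [hPz n (by omega)]
      split_ifs with h1
      · rw [hQz (n-1) (by omega)]; ring
      · ring
    -- norm
    have hnorm' : ∀ x ∈ Set.Icc (-1:ℝ) 1,
        P'.eval (x:ℂ) * starRingEnd ℂ (P'.eval (x:ℂ))
          + (1 - (x:ℂ)^2) * (Q'.eval (x:ℂ) * starRingEnd ℂ (Q'.eval (x:ℂ))) = 1 := by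
      intro x hx
      have hxn := hnorm x hx
      have e1 : P'.eval (x:ℂ) = a*(P.eval (x:ℂ)*(x:ℂ)) + b*(Q.eval (x:ℂ) - Q.eval (x:ℂ)*(x:ℂ)^2) := by
        simp [hP']
      have e3 : Q'.eval (x:ℂ) = b*(Q.eval (x:ℂ)*(x:ℂ)) - a*P.eval (x:ℂ) := by
        simp [hQ']
      rw [e1, e3]
      simp only [map_add, _root_.map_mul, map_sub, _root_.map_pow, hca, hcb, Complex.conj_ofReal]
      linear_combination (a*b) * hxn + hab
    obtain ⟨Ψ', hΨ'mem, hΨ'⟩ := ih P' Q' hP'deg hQ'deg hP'par hQ'par hnorm'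
    refine ⟨Fin.snoc Ψ' ψ, ?_, ?_⟩
    · intro k
      induction k using Fin.lastCases with
      | last => simpa using hψmem
      | cast i => simpa using hΨ'mem i
    · intro x hx
      have hsplit := Ud_snoc d Ψ' ψ x
      rw [hsplit, hΨ' x hx]
      have hx2 : (0:ℝ) ≤ 1 - x^2 := by nlinarith [hx.1, hx.2]
      have hs2 : ((Real.sqrt (1 - x^2) : ℝ) : ℂ)^2 = 1 - (x:ℂ)^2 := by
        rw [show ((Real.sqrt (1 - x^2) : ℝ) : ℂ)^2 = (((Real.sqrt (1-x^2))^2 : ℝ) : ℂ) by push_cast; ring,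
          Real.sq_sqrt hx2]
        push_cast; ring
      have e1 : P'.eval (x:ℂ) = a*(P.eval (x:ℂ)*(x:ℂ)) + b*(Q.eval (x:ℂ) - Q.eval (x:ℂ)*(x:ℂ)^2) := by
        simp [hP']
      have e3 : Q'.eval (x:ℂ) = b*(Q.eval (x:ℂ)*(x:ℂ)) - a*P.eval (x:ℂ) := by
        simp [hQ']
      have e2 : (polyConj P').eval (x:ℂ)
          = b*((polyConj P).eval (x:ℂ)*(x:ℂ)) + a*((polyConj Q).eval (x:ℂ) - (polyConj Q).eval (x:ℂ)*(x:ℂ)^2) := by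
        simp only [hP', polyConj, Polynomial.map_add, Polynomial.map_mul, Polynomial.map_sub,
          Polynomial.map_pow, Polynomial.map_C, Polynomial.map_X, Polynomial.eval_add,
          Polynomial.eval_mul, Polynomial.eval_sub, Polynomial.eval_pow, Polynomial.eval_C,
          Polynomial.eval_X, hca, hcb]
      have e4 : (polyConj Q').eval (x:ℂ)
          = a*((polyConj Q).eval (x:ℂ)*(x:ℂ)) - b*(polyConj P).eval (x:ℂ) := by
        simp only [hQ', polyConj, Polynomial.map_sub, Polynomial.map_mul, Polynomial.map_C,
          Polynomial.map_X, Polynomial.eval_sub, Polynomial.eval_mul, Polynomial.eval_C,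
          Polynomial.eval_X, hca, hcb]
      ext i j
      fin_cases i <;> fin_cases j
      · simp only [Wx, eiZ, Matrix.mul_apply, Fin.sum_univ_two, Fin.isValue, Matrix.cons_val',
          Matrix.cons_val_zero, Matrix.cons_val_one, Matrix.head_cons, Matrix.empty_val',
          Matrix.cons_val_fin_one, Matrix.head_fin_const, Matrix.of_apply, Fin.mk_zero, Fin.mk_one]
        rw [e1, e3, ← hb]
        linear_combination (a*b*(P.eval (x:ℂ)) - b^2*(x:ℂ)*(Q.eval (x:ℂ))) * hs2
          + (P.eval (x:ℂ)) * hab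
          + (((Real.sqrt (1-x^2) : ℝ):ℂ)^2 * b * (b*(Q.eval (x:ℂ)*(x:ℂ)) - a*P.eval (x:ℂ))) * Complex.I_sq
      · simp only [Wx, eiZ, Matrix.mul_apply, Fin.sum_univ_two, Fin.isValue, Matrix.cons_val',
          Matrix.cons_val_zero, Matrix.cons_val_one, Matrix.head_cons, Matrix.empty_val',
          Matrix.cons_val_fin_one, Matrix.head_fin_const, Matrix.of_apply, Fin.mk_zero, Fin.mk_one]
        rw [e1, e3, ← ha]
        linear_combination (Complex.I*((Real.sqrt (1-x^2) : ℝ):ℂ)*(Q.eval (x:ℂ))) * hab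
      · simp only [Wx, eiZ, Matrix.mul_apply, Fin.sum_univ_two, Fin.isValue, Matrix.cons_val',
          Matrix.cons_val_zero, Matrix.cons_val_one, Matrix.head_cons, Matrix.empty_val',
          Matrix.cons_val_fin_one, Matrix.head_fin_const, Matrix.of_apply, Fin.mk_zero, Fin.mk_one]
        rw [e2, e4, ← hb]
        linear_combination (Complex.I*((Real.sqrt (1-x^2) : ℝ):ℂ)*((polyConj Q).eval (x:ℂ))) * hab
      · simp only [Wx, eiZ, Matrix.mul_apply, Fin.sum_univ_two, Fin.isValue, Matrix.cons_val',
          Matrix.cons_val_zero, Matrix.cons_val_one, Matrix.head_cons, Matrix.empty_val',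
          Matrix.cons_val_fin_one, Matrix.head_fin_const, Matrix.of_apply, Fin.mk_zero, Fin.mk_one]
        rw [e2, e4, ← ha]
        linear_combination (a*b*((polyConj P).eval (x:ℂ)) - a^2*(x:ℂ)*((polyConj Q).eval (x:ℂ))) * hs2
          + ((polyConj P).eval (x:ℂ)) * hab
          + (((Real.sqrt (1-x^2) : ℝ):ℂ)^2 * a * (a*((polyConj Q).eval (x:ℂ)*(x:ℂ)) - b*(polyConj P).eval (x:ℂ))) * Complex.I_sq

theorem qsp_existence (d : ℕ) (hd : 1 ≤ d) (P Q : Polynomial ℂ)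
    (hPdeg : P.degree ≤ d) (hQdeg : Q.degree ≤ ((d - 1 : ℕ) : WithBot ℕ))
    (hPpar : HasParity P d) (hQpar : HasParity Q (d - 1))
    (hnorm : ∀ x ∈ Set.Icc (-1 : ℝ) 1,
      ‖P.eval (x : ℂ)‖ ^ 2
        + (1 - x ^ 2) * ‖Q.eval (x : ℂ)‖ ^ 2 = 1) :
    ∃ Ψ : Fin (d + 1) → ℝ,
      (∀ k, Ψ k ∈ Set.Ico (-Real.pi) Real.pi) ∧
      ∀ x ∈ Set.Icc (-1 : ℝ) 1,
        Ud d Ψ x =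
          !![P.eval (x : ℂ), Complex.I * Q.eval (x : ℂ) * Real.sqrt (1 - x ^ 2);
             Complex.I * (polyConj Q).eval (x : ℂ) * Real.sqrt (1 - x ^ 2),
             (polyConj P).eval (x : ℂ)] := by
  have hP' : ∀ n, d < n → P.coeff n = 0 := fun n hn =>
    Polynomial.coeff_eq_zero_of_degree_lt (lt_of_le_of_lt hPdeg (by exact_mod_cast hn))
  have hQ'' : ∀ n, d ≤ n → Q.coeff n = 0 := fun n hn =>
    Polynomial.coeff_eq_zero_of_degree_lt (lt_of_le_of_lt hQdeg (by
      have h1 : (d-1 : ℕ) < n := by omega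
      exact_mod_cast h1))
  have hQpar' : ∀ n, Q.coeff n ≠ 0 → n % 2 = (d+1) % 2 := fun n hc => by
    have h2 := hQpar n hc
    omega
  have hnorm' : ∀ x ∈ Set.Icc (-1:ℝ) 1,
      P.eval (x:ℂ) * starRingEnd ℂ (P.eval (x:ℂ))
        + (1 - (x:ℂ)^2) * (Q.eval (x:ℂ) * starRingEnd ℂ (Q.eval (x:ℂ))) = 1 := by
    intro x hx
    have h := hnorm x hx
    rw [Complex.sq_norm, Complex.sq_norm] at h
    rw [Complex.mul_conj, Complex.mul_conj]
    exact_mod_cast h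
  exact qsp_aux d P Q hP' hQ'' hPpar hQpar' hnorm'
end

section
/- (Layer stripping recovers the first coefficient) Let γ = (γ_0,...,γ_d) be a finite sequence with NLFT (a,b), so [[a,b],[-b*,a*]] = ∏_{j=0}^d (1+|γ_j|²)^{-1/2}[[1, γ_j z^j],[-conj(γ_j)z^{-j},1]]. Then a*(0) > 0 and γ_0 = b(0)/a*(0), where b(0) is the constant coefficient of the polynomial b and a*(0) the constant coefficient of a*. -/
open Matrix Complex

/-- A single factor of the SU(2) nonlinear Fourier transform:
`(1+|γ|²)^{-1/2} [[1, γ zᵏ],[-conj(γ) z^{-k}, 1]]`. -/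
noncomputable def nlftFactor (k : ℤ) (g : ℂ) (z : ℂ) : Matrix (Fin 2) (Fin 2) ℂ :=
  (((1 / Real.sqrt (1 + ‖g‖ ^ 2) : ℝ) : ℂ)) •
    !![1, g * z ^ k; -(starRingEnd ℂ g) * z ^ (-k), 1]

/-- The nonlinear Fourier transform of the finite sequence `γ : Fin n → ℂ`
supported on indices `m, m+1, …, m+n-1`. -/
noncomputable def nlft (m : ℤ) {n : ℕ} (γ : Fin n → ℂ) (z : ℂ) :
    Matrix (Fin 2) (Fin 2) ℂ :=
  (List.ofFn (fun j : Fin n => nlftFactor (m + (j : ℕ)) (γ j) z)).prod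

lemma nlft_nil (m : ℤ) (γ : Fin 0 → ℂ) (z : ℂ) : nlft m γ z = 1 := by
  simp [nlft]

lemma nlft_succ (m : ℤ) {n : ℕ} (γ : Fin (n + 1) → ℂ) (z : ℂ) :
    nlft m γ z = nlftFactor m (γ 0) z * nlft (m + 1) (fun j => γ j.succ) z := by
  unfold nlft
  rw [List.ofFn_succ, List.prod_cons]
  have h0 : nlftFactor (m + ((0 : Fin (n+1)) : ℕ)) (γ 0) z = nlftFactor m (γ 0) z := by
    norm_num
  rw [h0]
  have h1 : (fun j : Fin n => nlftFactor (m + ((j.succ : Fin (n+1)) : ℕ)) (γ j.succ) z)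
      = fun j : Fin n => nlftFactor (m + 1 + (j : ℕ)) (γ j.succ) z := by
    funext j
    have : (m + ((j.succ : Fin (n+1)) : ℕ) : ℤ) = m + 1 + (j : ℕ) := by
      push_cast [Fin.val_succ]; ring
    rw [this]
  rw [h1]

lemma nlft_key (n : ℕ) : ∀ (m : ℤ) (γ : Fin n → ℂ), ∃ P Q : Polynomial ℂ,
    Q.eval 0 = ((∏ j, (1 / Real.sqrt (1 + ‖γ j‖ ^ 2)) : ℝ) : ℂ) ∧
    P.eval 0 = (List.ofFn γ).headI * Q.eval 0 ∧
    ∀ z : ℂ, z ≠ 0 →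
      nlft m γ z 0 1 = z ^ m * P.eval z ∧ nlft m γ z 1 1 = Q.eval z := by
  induction n with
  | zero =>
    intro m γ
    exact ⟨0, 1, by simp, by simp [show (default : ℂ) = 0 from rfl], fun z hz => by
      simp [nlft_nil, Matrix.one_apply]⟩
  | succ n ih =>
    intro m γ
    obtain ⟨P, Q, hQ0, hP0, hPQ⟩ := ih (m + 1) (fun j => γ j.succ)
    set c : ℂ := ((1 / Real.sqrt (1 + ‖γ 0‖ ^ 2) : ℝ) : ℂ) with hc
    refine ⟨Polynomial.C c * (Polynomial.X * P + Polynomial.C (γ 0) * Q),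
      Polynomial.C c * (Polynomial.C (-(starRingEnd ℂ (γ 0))) * (Polynomial.X * P) + Q),
      ?_, ?_, ?_⟩
    · simp only [Polynomial.eval_mul, Polynomial.eval_add, Polynomial.eval_C,
        Polynomial.eval_X, mul_zero, zero_mul, zero_add, hQ0, hc]
      rw [Fin.prod_univ_succ, Complex.ofReal_mul]
    · simp only [Polynomial.eval_mul, Polynomial.eval_add, Polynomial.eval_C,
        Polynomial.eval_X, mul_zero, zero_mul, zero_add, hP0, List.ofFn_succ,
        List.headI_cons]
      ring
    · intro z hz
      obtain ⟨h01, h11⟩ := hPQ z hz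
      have e1 : z ^ (m + 1) = z ^ m * z := zpow_add_one₀ hz m
      have e2 : z ^ (-m) * z ^ (m + 1) = z := by
        rw [← zpow_add₀ hz]
        norm_num
      rw [nlft_succ]
      constructor
      · rw [Matrix.mul_apply, Fin.sum_univ_two]
        simp only [nlftFactor, Matrix.smul_apply, Matrix.cons_val', Matrix.cons_val_zero,
          Matrix.cons_val_one, Matrix.head_cons, Matrix.empty_val', Matrix.cons_val_fin_one,
          Matrix.head_fin_const, smul_eq_mul, Matrix.of_apply]
        rw [h01, h11, ← hc]
        simp only [Polynomial.eval_mul, Polynomial.eval_add, Polynomial.eval_C,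
          Polynomial.eval_X, e1]
        ring
      · rw [Matrix.mul_apply, Fin.sum_univ_two]
        simp only [nlftFactor, Matrix.smul_apply, Matrix.cons_val', Matrix.cons_val_zero,
          Matrix.cons_val_one, Matrix.head_cons, Matrix.empty_val', Matrix.cons_val_fin_one,
          Matrix.head_fin_const, smul_eq_mul, Matrix.of_apply]
        rw [h01, h11, ← hc]
        simp only [Polynomial.eval_mul, Polynomial.eval_add, Polynomial.eval_C,
          Polynomial.eval_X]
        rw [e1]
        have : c * (-(starRingEnd ℂ (γ 0)) * z ^ (-m)) * (z ^ m * z * P.eval z)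
            = c * (-(starRingEnd ℂ (γ 0)) * (z ^ (-m) * z ^ (m + 1)) * P.eval z) := by
          rw [e1]; ring
        rw [this, e2]
        ring

theorem layer_stripping_first_coefficient (d : ℕ) (γ : Fin (d + 1) → ℂ)
    (b astar : Polynomial ℂ)
    (hb : ∀ z : ℂ, z ≠ 0 → nlft 0 γ z 0 1 = b.eval z)
    (ha : ∀ z : ℂ, z ≠ 0 → nlft 0 γ z 1 1 = astar.eval z) :
    (astar.coeff 0).im = 0 ∧ 0 < (astar.coeff 0).re ∧
      γ 0 = b.coeff 0 / astar.coeff 0 := by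
  obtain ⟨P, Q, hQ0, hP0, hPQ⟩ := nlft_key (d + 1) 0 γ
  have hinf : ({0}ᶜ : Set ℂ).Infinite := (Set.finite_singleton (0 : ℂ)).infinite_compl
  have hbP : b = P := by
    by_contra h
    have : (b - P) = 0 := by
      apply Polynomial.eq_zero_of_infinite_isRoot
      apply hinf.mono
      intro z hz
      have hz' : z ≠ 0 := hz
      have h1 := (hPQ z hz').1
      have h2 := hb z hz'
      simp only [Polynomial.IsRoot, Polynomial.eval_sub, Set.mem_setOf_eq]
      rw [← h2, h1]
      simp [zpow_zero]
    exact h (by linear_combination (norm := ring_nf) this)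
  have haQ : astar = Q := by
    by_contra h
    have : (astar - Q) = 0 := by
      apply Polynomial.eq_zero_of_infinite_isRoot
      apply hinf.mono
      intro z hz
      have hz' : z ≠ 0 := hz
      have h1 := (hPQ z hz').2
      have h2 := ha z hz'
      simp only [Polynomial.IsRoot, Polynomial.eval_sub, Set.mem_setOf_eq]
      rw [← h2, h1, sub_self]
    exact h (by linear_combination (norm := ring_nf) this)
  have ha0 : astar.coeff 0 = ((∏ j, (1 / Real.sqrt (1 + ‖γ j‖ ^ 2)) : ℝ) : ℂ) := by
    rw [haQ, Polynomial.coeff_zero_eq_eval_zero, hQ0]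
  have hpos : (0 : ℝ) < ∏ j, (1 / Real.sqrt (1 + ‖γ j‖ ^ 2)) := by
    apply Finset.prod_pos
    intro j _
    have : (0 : ℝ) < Real.sqrt (1 + ‖γ j‖ ^ 2) := by
      apply Real.sqrt_pos.2
      positivity
    positivity
  refine ⟨by rw [ha0]; exact Complex.ofReal_im _, by rw [ha0, Complex.ofReal_re]; exact hpos, ?_⟩
  have hb0 : b.coeff 0 = γ 0 * astar.coeff 0 := by
    rw [hbP, haQ, Polynomial.coeff_zero_eq_eval_zero, Polynomial.coeff_zero_eq_eval_zero, hP0]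
    congr 1
    simp [List.ofFn_succ]
  have hne : astar.coeff 0 ≠ 0 := by
    rw [ha0]
    exact_mod_cast hpos.ne'
  rw [hb0, mul_div_assoc, div_self hne, mul_one]
end

section
/- (Layer stripping recursion preserves the NLFT structure) Suppose (a,b) is the NLFT of the finite sequence (γ_0, γ_1,...,γ_d) with γ_0 = b(0)/a*(0). Define a_1*(z) = (a*(z) + conj(γ_0) b(z))/√(1+|γ_0|²) and b_1(z) = (b(z) - γ_0 a*(z))/(z√(1+|γ_0|²)). Then b_1 is a polynomial (the numerator vanishes at z=0), and (a_1, b_1) is the NLFT of the shifted sequence (γ_1,...,γ_d) placed at indices 0,...,d-1. -/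
open Matrix Complex

lemma nlft_cons (m : ℤ) {n : ℕ} (γ : Fin (n+1) → ℂ) (z : ℂ) :
    nlft m γ z = nlftFactor m (γ 0) z * nlft (m+1) (fun j => γ j.succ) z := by
  unfold nlft
  rw [List.ofFn_succ, List.prod_cons]
  congr 1
  · norm_num
  · refine congrArg List.prod (congrArg List.ofFn (funext fun j => ?_))
    show nlftFactor (m + ((j.succ : Fin (n+1)) : ℕ)) (γ j.succ) z
        = nlftFactor (m + 1 + (j : ℕ)) (γ j.succ) z
    have hj : ((j.succ : Fin (n+1)) : ℕ) = (j : ℕ) + 1 := Fin.val_succ j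
    have : (m + ((j.succ : Fin (n+1)) : ℕ) : ℤ) = m + 1 + (j : ℕ) := by
      rw [hj]; push_cast; ring
    rw [this]

lemma Dzinv_mul_Dz {z : ℂ} (hz : z ≠ 0) :
    (!![1,0;0,z⁻¹] : Matrix (Fin 2) (Fin 2) ℂ) * !![1,0;0,z] = 1 := by
  ext i j
  fin_cases i <;> fin_cases j <;>
    simp [Matrix.mul_apply, Fin.sum_univ_two, Matrix.one_apply, inv_mul_cancel₀ hz]

lemma Dz_mul_Dzinv {z : ℂ} (hz : z ≠ 0) :
    (!![1,0;0,z] : Matrix (Fin 2) (Fin 2) ℂ) * !![1,0;0,z⁻¹] = 1 := by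
  ext i j
  fin_cases i <;> fin_cases j <;>
    simp [Matrix.mul_apply, Fin.sum_univ_two, Matrix.one_apply, mul_inv_cancel₀ hz]

lemma factor_succ (k : ℤ) (g : ℂ) {z : ℂ} (hz : z ≠ 0) :
    nlftFactor (k+1) g z = !![1,0;0,z⁻¹] * nlftFactor k g z * !![1,0;0,z] := by
  unfold nlftFactor
  rw [Matrix.mul_smul, Matrix.smul_mul]
  congr 1
  have h1 : z ^ (k+1) = z ^ k * z := zpow_add_one₀ hz k
  ext i j
  fin_cases i <;> fin_cases j
  · simp [Matrix.mul_apply, Fin.sum_univ_two]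
  · simp only [Matrix.mul_apply, Fin.sum_univ_two]
    simp [h1]
    ring
  · simp [Matrix.mul_apply, Fin.sum_univ_two]
    rw [zpow_add₀ hz, _root_.zpow_neg, _root_.zpow_neg, zpow_one]
    ring
  · simp [Matrix.mul_apply, Fin.sum_univ_two, inv_mul_cancel₀ hz]

lemma nlft_shift {n : ℕ} (γ : Fin n → ℂ) {z : ℂ} (hz : z ≠ 0) :
    ∀ m : ℤ, nlft (m+1) γ z = !![1,0;0,z⁻¹] * nlft m γ z * !![1,0;0,z] := by
  induction n with
  | zero =>
      intro m
      unfold nlft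
      simp [Dzinv_mul_Dz hz]
  | succ n ih =>
      intro m
      rw [nlft_cons (m+1), nlft_cons m, factor_succ m (γ 0) hz, ih _ (m+1)]
      simp only [Matrix.mul_assoc]
      rw [← Matrix.mul_assoc !![1,0;0,z] !![1,0;0,z⁻¹], Dz_mul_Dzinv hz, Matrix.one_mul]

lemma nlft_cons_entries {n : ℕ} (γ : Fin (n+1) → ℂ) {z : ℂ} (hz : z ≠ 0) :
    nlft 0 γ z 0 1 = ((1 / Real.sqrt (1 + ‖γ 0‖ ^ 2) : ℝ) : ℂ) *
      (z * nlft 0 (fun j => γ j.succ) z 0 1 + γ 0 * nlft 0 (fun j => γ j.succ) z 1 1) ∧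
    nlft 0 γ z 1 1 = ((1 / Real.sqrt (1 + ‖γ 0‖ ^ 2) : ℝ) : ℂ) *
      (nlft 0 (fun j => γ j.succ) z 1 1 -
        (starRingEnd ℂ) (γ 0) * z * nlft 0 (fun j => γ j.succ) z 0 1) := by
  have h := nlft_cons 0 γ z
  rw [nlft_shift _ hz 0] at h
  rw [h]
  unfold nlftFactor
  constructor <;>
  · simp only [Matrix.mul_apply, Fin.sum_univ_two, Matrix.smul_apply, Matrix.cons_val_zero,
      Matrix.cons_val_one, Matrix.head_cons, Matrix.head_fin_const, Matrix.cons_val', smul_eq_mul,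
      Matrix.empty_val', Matrix.cons_val_fin_one, Matrix.of_apply, neg_zero, zpow_zero]
    field_simp
    ring

lemma nlft_entries_poly {n : ℕ} (γ : Fin n → ℂ) :
    ∃ B E : Polynomial ℂ, E.coeff 0 ≠ 0 ∧
      ∀ z : ℂ, z ≠ 0 → nlft 0 γ z 0 1 = B.eval z ∧ nlft 0 γ z 1 1 = E.eval z := by
  induction n with
  | zero =>
      refine ⟨0, 1, by simp, fun z hz => ?_⟩
      unfold nlft
      simp [Matrix.one_apply]
  | succ n ih =>
      obtain ⟨B', E', hE', h⟩ := ih (fun j => γ j.succ)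
      have hsqrt : Real.sqrt (1 + ‖γ 0‖ ^ 2) ≠ 0 := by positivity
      have hsne : (((1 / Real.sqrt (1 + ‖γ 0‖ ^ 2) : ℝ) : ℂ)) ≠ 0 := by
        have : (0:ℝ) < 1 / Real.sqrt (1 + ‖γ 0‖ ^ 2) := by positivity
        exact Complex.ofReal_ne_zero.mpr this.ne'
      refine ⟨Polynomial.C (((1 / Real.sqrt (1 + ‖γ 0‖ ^ 2) : ℝ) : ℂ)) *
          (Polynomial.X * B' + Polynomial.C (γ 0) * E'),
        Polynomial.C (((1 / Real.sqrt (1 + ‖γ 0‖ ^ 2) : ℝ) : ℂ)) *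
          (E' - Polynomial.C ((starRingEnd ℂ) (γ 0)) * Polynomial.X * B'),
        ?_, fun z hz => ?_⟩
      · simp [Polynomial.coeff_C_mul, Polynomial.mul_coeff_zero, hsne, hE', hsqrt]
      · obtain ⟨h1, h2⟩ := h z hz
        obtain ⟨g1, g2⟩ := nlft_cons_entries γ hz
        rw [g1, g2, h1, h2]
        refine ⟨?_, ?_⟩ <;>
          (simp only [Polynomial.eval_mul, Polynomial.eval_add, Polynomial.eval_sub,
            Polynomial.eval_C, Polynomial.eval_X]; try ring)

theorem layer_stripping_recursion (d : ℕ) (γ : Fin (d + 1) → ℂ)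
    (b astar : Polynomial ℂ)
    (hb : ∀ z : ℂ, z ≠ 0 → nlft 0 γ z 0 1 = b.eval z)
    (ha : ∀ z : ℂ, z ≠ 0 → nlft 0 γ z 1 1 = astar.eval z)
    (hγ0 : γ 0 = b.coeff 0 / astar.coeff 0) :
    ∃ b₁ : Polynomial ℂ,
      Polynomial.X * Polynomial.C ((Real.sqrt (1 + ‖γ 0‖ ^ 2) : ℝ) : ℂ) * b₁ =
        b - Polynomial.C (γ 0) * astar ∧
      (∀ z : ℂ, z ≠ 0 →
        nlft 0 (fun j : Fin d => γ j.succ) z 0 1 = b₁.eval z ∧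
        nlft 0 (fun j : Fin d => γ j.succ) z 1 1 =
          (Polynomial.C (((1 / Real.sqrt (1 + ‖γ 0‖ ^ 2) : ℝ)) : ℂ) *
            (astar + Polynomial.C ((starRingEnd ℂ) (γ 0)) * b)).eval z) := by
  set r : ℝ := Real.sqrt (1 + ‖γ 0‖ ^ 2) with hrdef
  have hrpos : 0 < r := by rw [hrdef]; positivity
  have hrC : ((r : ℂ)) ≠ 0 := by
    exact_mod_cast hrpos.ne'
  have hrr : (r : ℂ) * (r : ℂ) = 1 + ((‖γ 0‖ : ℝ) : ℂ) ^ 2 := by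
    have h0 : r * r = 1 + ‖γ 0‖ ^ 2 := by
      rw [hrdef]
      exact Real.mul_self_sqrt (by positivity)
    calc (r:ℂ) * (r:ℂ) = ((r * r : ℝ) : ℂ) := by push_cast; ring
      _ = _ := by rw [h0]; push_cast; ring
  have hmod : (((‖γ 0‖ : ℝ)) : ℂ) ^ 2 = (starRingEnd ℂ) (γ 0) * γ 0 := by
    rw [← Complex.normSq_eq_conj_mul_self]
    norm_cast
    exact Complex.sq_norm _
  -- astar has nonzero constant coefficient
  obtain ⟨B, E, hE0, hBE⟩ := nlft_entries_poly γ
  have hastarE : astar = E := by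
    have hroot : astar - E = 0 := by
      apply Polynomial.eq_zero_of_infinite_isRoot
      apply Set.Infinite.mono (s := {z : ℂ | z ≠ 0})
      · intro z hz
        simp only [Set.mem_setOf_eq] at hz
        simp only [Set.mem_setOf_eq, Polynomial.IsRoot.def, Polynomial.eval_sub]
        rw [← ha z hz, ← (hBE z hz).2, sub_self]
      · exact Set.Finite.infinite_compl (Set.finite_singleton 0)
    exact sub_eq_zero.mp hroot
  have hastar0 : astar.coeff 0 ≠ 0 := by rw [hastarE]; exact hE0
  -- divisibility by X
  have hdvd : Polynomial.X ∣ (b - Polynomial.C (γ 0) * astar) := by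
    rw [Polynomial.X_dvd_iff]
    simp only [Polynomial.coeff_sub, Polynomial.coeff_C_mul]
    rw [hγ0, div_mul_cancel₀ _ hastar0, sub_self]
  obtain ⟨q, hq⟩ := hdvd
  refine ⟨Polynomial.C ((r : ℂ))⁻¹ * q, ?_, fun z hz => ?_⟩
  · rw [hq, show Polynomial.X * Polynomial.C ((r:ℂ)) * (Polynomial.C ((r : ℂ))⁻¹ * q)
        = (Polynomial.C ((r:ℂ)) * Polynomial.C ((r : ℂ))⁻¹) * (Polynomial.X * q) by ring,
      ← Polynomial.C_mul, mul_inv_cancel₀ hrC, Polynomial.C_1, one_mul]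
  · obtain ⟨g1, g2⟩ := nlft_cons_entries γ hz
    rw [hb z hz] at g1
    rw [ha z hz] at g2
    set Bv := nlft 0 (fun j => γ j.succ) z 0 1 with hBv
    set Ev := nlft 0 (fun j => γ j.succ) z 1 1 with hEv
    set s : ℂ := ((1 / r : ℝ) : ℂ) with hsdef
    have hs1 : (r : ℂ) * s = 1 := by
      rw [hsdef]
      push_cast
      field_simp
    -- key identities
    have hre : (r : ℂ) * Ev = astar.eval z + (starRingEnd ℂ) (γ 0) * b.eval z := by
      linear_combination (-1 : ℂ) * g2 - (starRingEnd ℂ) (γ 0) * g1 + s * Ev * hmod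
        + s * Ev * hrr - (r : ℂ) * Ev * hs1
    have hrb : (r : ℂ) * (z * Bv) = b.eval z - γ 0 * astar.eval z := by
      linear_combination (-1 : ℂ) * g1 + γ 0 * g2 + s * z * Bv * hmod
        + s * z * Bv * hrr - (r : ℂ) * z * Bv * hs1
    have hqz : b.eval z - γ 0 * astar.eval z = z * Polynomial.eval z q := by
      have h := congrArg (Polynomial.eval z) hq
      simpa only [Polynomial.eval_sub, Polynomial.eval_mul, Polynomial.eval_C,
        Polynomial.eval_X] using h
    constructor
    · have hq' : z * Polynomial.eval z q = z * ((r : ℂ) * Bv) := by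
        rw [← hqz, ← hrb]; ring
      have hq'' : Polynomial.eval z q = (r : ℂ) * Bv := mul_left_cancel₀ hz hq'
      simp only [Polynomial.eval_mul, Polynomial.eval_C, hq'']
      rw [inv_mul_cancel_left₀ hrC]
    · simp only [Polynomial.eval_mul, Polynomial.eval_add, Polynomial.eval_C]
      rw [← hre, show s * ((r:ℂ) * Ev) = ((r:ℂ) * s) * Ev by ring, hs1, one_mul]
end

section
/- (Connection between QSP and NLFT) For any d ∈ ℕ and Ψ = (ψ_0,...,ψ_d) ∈ (-π/2,π/2)^{d+1}, define the finite sequence γ_k = tan ψ_k for 0 ≤ k ≤ d. Then for all θ ∈ [0,π]: D · H · U_d(cos θ, Ψ) · H · D† = (NLFT of γ)(e^{2iθ}) · diag(e^{idθ}, e^{-idθ}), where H = (1/√2)[[1,1],[1,-1]] is the Hadamard matrix and D = diag(1, i). -/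
open Matrix Complex

/-- The Hadamard matrix `H = (1/√2)[[1,1],[1,-1]]`. -/
noncomputable def Hmat : Matrix (Fin 2) (Fin 2) ℂ :=
  (((1 / Real.sqrt 2 : ℝ) : ℂ)) • !![1, 1; 1, -1]

/-- `D = diag(1, i)`. -/
noncomputable def Dmat : Matrix (Fin 2) (Fin 2) ℂ := !![1, 0; 0, Complex.I]

/-! ### Auxiliary definitions and lemmas -/

/-- `diag(e^{inθ}, e^{-inθ})`. -/
noncomputable def Ediag (θ : ℝ) (n : ℤ) : Matrix (Fin 2) (Fin 2) ℂ :=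
  !![Complex.exp (n * θ * Complex.I), 0; 0, Complex.exp (-(n * θ * Complex.I))]

lemma Ediag_mul (θ : ℝ) (a b : ℤ) : Ediag θ a * Ediag θ b = Ediag θ (a + b) := by
  unfold Ediag
  ext i j
  fin_cases i <;> fin_cases j <;>
    · simp [Matrix.mul_apply, Fin.sum_univ_two, ← Complex.exp_add]
      try (congr 1; push_cast; ring)

lemma Ediag_zero (θ : ℝ) : Ediag θ 0 = 1 := by
  unfold Ediag
  ext i j
  fin_cases i <;> fin_cases j <;> simp [Matrix.one_apply]

lemma Dmat_conjT : Dmatᴴ = !![1, 0; 0, -Complex.I] := by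
  unfold Dmat; ext i j; fin_cases i <;> fin_cases j <;> simp [Matrix.conjTranspose_apply]

lemma h2c : ((Real.sqrt 2 : ℝ) : ℂ) * ((Real.sqrt 2 : ℝ) : ℂ) = 2 := by
  norm_cast
  exact Real.mul_self_sqrt (by norm_num)

lemma CmC : (Hmat * Dmatᴴ) * (Dmat * Hmat) = 1 := by
  rw [Dmat_conjT]
  unfold Hmat Dmat
  ext i j
  fin_cases i <;> fin_cases j <;>
    · simp [Matrix.mul_apply, Fin.sum_univ_two, Matrix.one_apply]
      field_simp
      first
        | linear_combination 2 * h2c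
        | linear_combination -h2c
        | linear_combination -h2c - Complex.I_sq
        | linear_combination Complex.I_sq
        | skip

lemma conj_smul (A : Matrix (Fin 2) (Fin 2) ℂ) :
    (Dmat * Hmat) * A * (Hmat * Dmatᴴ) =
      ((1 / 2 : ℂ)) • (Dmat * !![1, 1; 1, -1] * A * (!![1, 1; 1, -1] * Dmatᴴ)) := by
  have h : ((1 / Real.sqrt 2 : ℝ) : ℂ) * ((1 / Real.sqrt 2 : ℝ) : ℂ) = 1 / 2 := by
    norm_cast
    rw [div_mul_div_comm, Real.mul_self_sqrt (by norm_num : (0:ℝ) ≤ 2)]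
    norm_num
  unfold Hmat
  simp only [Matrix.smul_mul, Matrix.mul_smul, smul_smul]
  rw [h]

lemma conj_eiZ (ψ : ℝ) (h : ψ ∈ Set.Ioo (-(Real.pi / 2)) (Real.pi / 2)) (z : ℂ) :
    (Dmat * Hmat) * eiZ ψ * (Hmat * Dmatᴴ) = nlftFactor 0 ((Real.tan ψ : ℂ)) z := by
  have hc : (0 : ℝ) < Real.cos ψ := Real.cos_pos_of_mem_Ioo h
  have hnorm : (1 / Real.sqrt (1 + ‖((Real.tan ψ : ℂ))‖ ^ 2) : ℝ) = Real.cos ψ := by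
    rw [Complex.norm_real, Real.norm_eq_abs, _root_.sq_abs, one_div, Real.inv_sqrt_one_add_tan_sq hc]
  have hexp : Complex.exp (Complex.I * ψ) = Complex.cos ψ + Complex.sin ψ * Complex.I := by
    rw [mul_comm, Complex.exp_mul_I]
  have hexp' : Complex.exp (-(Complex.I * ψ)) =
      Complex.cos ψ - Complex.sin ψ * Complex.I := by
    rw [show -(Complex.I * (ψ:ℂ)) = (-(ψ:ℂ)) * Complex.I by ring, Complex.exp_mul_I,
      Complex.cos_neg, Complex.sin_neg]
    ring
  have htan : (Real.tan ψ : ℂ) = Complex.sin ψ / Complex.cos ψ := by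
    rw [Real.tan_eq_sin_div_cos]
    push_cast [Complex.ofReal_sin, Complex.ofReal_cos]
    ring
  have hcne : Complex.cos (ψ : ℂ) ≠ 0 := by
    rw [← Complex.ofReal_cos]
    exact_mod_cast Complex.ofReal_ne_zero.mpr hc.ne'
  rw [conj_smul, Dmat_conjT]
  unfold Dmat eiZ nlftFactor
  rw [hnorm, hexp, hexp', Complex.conj_ofReal, htan, Complex.ofReal_cos]
  ext i j
  fin_cases i <;> fin_cases j <;>
    · simp [Matrix.mul_apply, Fin.sum_univ_two]
      try field_simp
      try ring_nf
      try simp only [show (Complex.I) ^ 3 = -Complex.I from by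
        simp [pow_succ, Complex.I_sq], Complex.I_sq]
      try ring_nf

lemma conj_W (θ : ℝ) (hθ : θ ∈ Set.Icc (0 : ℝ) Real.pi) :
    (Dmat * Hmat) * Wx (Real.cos θ) * (Hmat * Dmatᴴ) = Ediag θ 1 := by
  have hs : Real.sqrt (1 - Real.cos θ ^ 2) = Real.sin θ :=
    (Real.sin_eq_sqrt_one_sub_cos_sq hθ.1 hθ.2).symm
  have hexp : Complex.exp (((1 : ℤ) : ℂ) * θ * Complex.I) =
      Complex.cos θ + Complex.sin θ * Complex.I := by
    rw [show ((1 : ℤ) : ℂ) * θ * Complex.I = (θ : ℂ) * Complex.I by push_cast; ring,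
      Complex.exp_mul_I]
  have hexp' : Complex.exp (-(((1 : ℤ) : ℂ) * θ * Complex.I)) =
      Complex.cos θ - Complex.sin θ * Complex.I := by
    rw [show -(((1 : ℤ) : ℂ) * θ * Complex.I) = (-(θ : ℂ)) * Complex.I by push_cast; ring,
      Complex.exp_mul_I, Complex.cos_neg, Complex.sin_neg]
    ring
  rw [conj_smul, Dmat_conjT]
  unfold Dmat Wx Ediag
  rw [hs, hexp, hexp', Complex.ofReal_cos, Complex.ofReal_sin]
  ext i j
  fin_cases i <;> fin_cases j <;>
    · simp [Matrix.mul_apply, Fin.sum_univ_two]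
      try field_simp
      try ring_nf
      try simp only [show (Complex.I) ^ 3 = -Complex.I from by
        simp [pow_succ, Complex.I_sq], Complex.I_sq]
      try ring_nf

lemma nlftFactor_swap (θ : ℝ) (k : ℤ) (g : ℂ) :
    Ediag θ k * nlftFactor 0 g (Complex.exp (2 * θ * Complex.I)) =
      nlftFactor k g (Complex.exp (2 * θ * Complex.I)) * Ediag θ k := by
  have hz : ∀ m : ℤ, Complex.exp (2 * θ * Complex.I) ^ m =
      Complex.exp ((m : ℂ) * (2 * θ * Complex.I)) := by
    intro m; rw [Complex.exp_int_mul]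
  have hsq : Complex.exp ((k : ℂ) * (2 * θ * Complex.I)) =
      Complex.exp ((k : ℂ) * θ * Complex.I) * Complex.exp ((k : ℂ) * θ * Complex.I) := by
    rw [← Complex.exp_add]
    congr 1
    ring
  have he : Complex.exp ((k : ℂ) * θ * Complex.I) ≠ 0 := Complex.exp_ne_zero _
  unfold Ediag nlftFactor
  ext i j
  fin_cases i <;> fin_cases j <;>
    · simp [Matrix.mul_apply, Fin.sum_univ_two, hz, Complex.exp_neg]
      try rw [hsq]
      try field_simp [he]
      try ring
      try (linear_combination (-(Complex.exp ((k : ℂ) * θ * Complex.I) * g *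
          ((Real.sqrt (1 + ‖g‖ ^ 2) : ℝ) : ℂ)⁻¹)) * (inv_mul_cancel₀ he))
      try (linear_combination (-((starRingEnd ℂ) g *
          ((Real.sqrt (1 + ‖g‖ ^ 2) : ℝ) : ℂ)⁻¹ *
          (Complex.exp ((k : ℂ) * θ * Complex.I))⁻¹)) * (mul_inv_cancel₀ he))

/-- Product split for `Ud`. -/
lemma Ud_succ (d : ℕ) (Ψ : Fin (d + 2) → ℝ) (x : ℝ) :
    Ud (d + 1) Ψ x = Ud d (Ψ ∘ Fin.castSucc) x * (Wx x * eiZ (Ψ (Fin.last (d + 1)))) := by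
  unfold Ud
  rw [List.ofFn_succ' (fun j : Fin (d + 1) => Wx x * eiZ (Ψ j.succ)), List.prod_concat,
    ← mul_assoc]
  simp [Fin.succ_castSucc, Fin.succ_last, Function.comp, -Fin.castSucc_succ]

lemma nlft_succ_s16 (d : ℕ) (γ : Fin (d + 2) → ℂ) (z : ℂ) :
    nlft 0 γ z = nlft 0 (γ ∘ Fin.castSucc) z *
      nlftFactor ((d : ℤ) + 1) (γ (Fin.last (d + 1))) z := by
  unfold nlft
  rw [List.ofFn_succ' (fun j : Fin (d + 2) => nlftFactor (0 + (j : ℕ)) (γ j) z),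
    List.prod_concat]
  simp [Function.comp, Fin.coe_castSucc, Fin.val_last]

lemma main_lemma (θ : ℝ) (hθ : θ ∈ Set.Icc (0 : ℝ) Real.pi) :
    ∀ (d : ℕ) (Ψ : Fin (d + 1) → ℝ),
      (∀ k, Ψ k ∈ Set.Ioo (-(Real.pi / 2)) (Real.pi / 2)) →
      (Dmat * Hmat) * Ud d Ψ (Real.cos θ) * (Hmat * Dmatᴴ) =
        nlft 0 (fun k => (Real.tan (Ψ k) : ℂ)) (Complex.exp (2 * θ * Complex.I)) *
          Ediag θ d := by
  intro d
  induction d with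
  | zero =>
    intro Ψ hΨ
    have h0 : Ud 0 Ψ (Real.cos θ) = eiZ (Ψ 0) := by
      unfold Ud; simp
    rw [h0, show ((0 : ℕ) : ℤ) = 0 from rfl, Ediag_zero, mul_one,
      conj_eiZ (Ψ 0) (hΨ 0) (Complex.exp (2 * θ * Complex.I))]
    unfold nlft
    simp
  | succ d ih =>
    intro Ψ hΨ
    set C := Dmat * Hmat with hC
    set Cm := Hmat * Dmatᴴ with hCm
    have hinv : Cm * C = 1 := CmC
    set z := Complex.exp (2 * θ * Complex.I) with hzdef
    rw [Ud_succ]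
    have hW := conj_W θ hθ
    have hE := conj_eiZ (Ψ (Fin.last (d + 1))) (hΨ _) z
    have hU := ih (Ψ ∘ Fin.castSucc) (fun k => hΨ _)
    have expand : C * (Ud d (Ψ ∘ Fin.castSucc) (Real.cos θ) *
        (Wx (Real.cos θ) * eiZ (Ψ (Fin.last (d + 1))))) * Cm =
        (C * Ud d (Ψ ∘ Fin.castSucc) (Real.cos θ) * Cm) *
          ((C * Wx (Real.cos θ) * Cm) * (C * eiZ (Ψ (Fin.last (d + 1))) * Cm)) := by
      simp only [mul_assoc]
      rw [show Cm * (C * (Wx (Real.cos θ) * (Cm * (C * (eiZ (Ψ (Fin.last (d + 1))) * Cm))))) =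
          Wx (Real.cos θ) * (Cm * (C * (eiZ (Ψ (Fin.last (d + 1))) * Cm))) by
        rw [← mul_assoc, ← mul_assoc, hinv, one_mul, mul_assoc],
        show Cm * (C * (eiZ (Ψ (Fin.last (d + 1))) * Cm)) =
          eiZ (Ψ (Fin.last (d + 1))) * Cm by
        rw [← mul_assoc, hinv, one_mul]]
    rw [expand, hU, hW, hE]
    rw [nlft_succ_s16 d (fun k => (Real.tan (Ψ k) : ℂ)) z]
    have swap := nlftFactor_swap θ ((d : ℤ) + 1) ((Real.tan (Ψ (Fin.last (d + 1))) : ℂ))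
    calc nlft 0 (fun k => (Real.tan ((Ψ ∘ Fin.castSucc) k) : ℂ)) z * Ediag θ d *
          (Ediag θ 1 * nlftFactor 0 ((Real.tan (Ψ (Fin.last (d + 1))) : ℂ)) z)
        = nlft 0 (fun k => (Real.tan ((Ψ ∘ Fin.castSucc) k) : ℂ)) z *
            ((Ediag θ d * Ediag θ 1) *
              nlftFactor 0 ((Real.tan (Ψ (Fin.last (d + 1))) : ℂ)) z) := by
          simp only [mul_assoc]
      _ = nlft 0 (fun k => (Real.tan ((Ψ ∘ Fin.castSucc) k) : ℂ)) z *
            (nlftFactor ((d : ℤ) + 1) ((Real.tan (Ψ (Fin.last (d + 1))) : ℂ)) z *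
              Ediag θ ((d : ℤ) + 1)) := by
          rw [Ediag_mul, swap]
      _ = nlft 0 ((fun k => (Real.tan (Ψ k) : ℂ)) ∘ Fin.castSucc) z *
            nlftFactor ((d : ℤ) + 1) ((Real.tan (Ψ (Fin.last (d + 1))) : ℂ)) z *
            Ediag θ ((d + 1 : ℕ) : ℤ) := by
          push_cast
          simp only [mul_assoc, Function.comp_def]

theorem qsp_nlft_connection (d : ℕ) (Ψ : Fin (d + 1) → ℝ)
    (hΨ : ∀ k, Ψ k ∈ Set.Ioo (-(Real.pi / 2)) (Real.pi / 2)) :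
    ∀ θ ∈ Set.Icc (0 : ℝ) Real.pi,
      Dmat * Hmat * Ud d Ψ (Real.cos θ) * Hmat * Dmatᴴ =
        nlft 0 (fun k => (Real.tan (Ψ k) : ℂ)) (Complex.exp (2 * θ * Complex.I)) *
          !![Complex.exp (d * θ * Complex.I), 0; 0, Complex.exp (-(d * θ * Complex.I))] := by
  intro θ hθ
  have h := main_lemma θ hθ d Ψ hΨ
  have hE : Ediag θ d = !![Complex.exp (d * θ * Complex.I), 0; 0,
      Complex.exp (-(d * θ * Complex.I))] := by
    unfold Ediag
    push_cast
    rfl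
  rw [← hE, ← h]
  simp only [mul_assoc]
end
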